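/- Substitution is height-preserving admissible in LG^ω: if Π is a derivation of Σ ; Γ ⊢ C and θ is a Σ-substitution (its range contains no nominal constants), then there is a derivation Π' of Σθ ; Γθ ⊢ Cθ with ht(Π') ≤ ht(Π). -/
import Mathlib


/-- Simply typed λ-terms (types elided) over a signature with a countably
infinite set of nominal constants (`nom`), other constants (`cst`) and
variables (`var`, de Bruijn style). -/
inductive Tm : Type
  | nom : ℕ → Tm
  | cst : ℕ → Tm
  | var : ℕ → Tm
  | app : Tm → Tm → Tm
  | lam : Tm → Tm
  deriving DecidableEq

namespace Tm

/-- Action of a permutation of nominal constants on a term: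
`π.a = π(a)` for nominal constants, other constants and variables are fixed,
and the action distributes over application and abstraction. -/
def perm (π : Equiv.Perm ℕ) : Tm → Tm
  | nom a => nom (π a)
  | cst c => cst c
  | var x => var x
  | app m n => app (perm π m) (perm π n)
  | lam m => lam (perm π m)

/-- The support of a term: the set of nominal constants occurring in it. -/
def supp : Tm → Finset ℕ
  | nom a => {a}
  | cst _ => ∅
  | var _ => ∅
  | app m n => supp m ∪ supp n
  | lam m => supp m

/-- Renaming of variables (with proper treatment of binders). -/
def rename (f : ℕ → ℕ) : Tm → Tm
  | nom a => nom a
  | cst c => cst c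
  | var x => var (f x)
  | app m n => app (rename f m) (rename f n)
  | lam m => lam (rename (fun k => match k with | 0 => 0 | k+1 => f k + 1) m)

/-- Lifting a simultaneous substitution under a binder. -/
def upS (θ : ℕ → Tm) : ℕ → Tm
  | 0 => var 0
  | x+1 => rename Nat.succ (θ x)

/-- Capture-avoiding simultaneous substitution. -/
def subst (θ : ℕ → Tm) : Tm → Tm
  | nom a => nom a
  | cst c => cst c
  | var x => θ x
  | app m n => app (subst θ m) (subst θ n)
  | lam m => lam (subst (upS θ) m)

end Tm

/-- A finite permutation of nominal constants. -/
def FinitePerm (π : Equiv.Perm ℕ) : Prop := {a : ℕ | π a ≠ a}.Finite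

/-- A Σ-substitution: a substitution whose range contains no
nominal constants (all terms in the range have empty support). -/
def SigmaSub (θ : ℕ → Tm) : Prop := ∀ x, (θ x).supp = ∅

/-- First-order formulas of the logic, with quantifiers `all`, `ex` and the
generic quantifier `nab` (∇) binding de Bruijn index 0. -/
inductive Fm : Type
  | top : Fm
  | bot : Fm
  | atom : ℕ → List Tm → Fm
  | eq : Tm → Tm → Fm
  | natF : Tm → Fm
  | and : Fm → Fm → Fm
  | or : Fm → Fm → Fm
  | imp : Fm → Fm → Fm
  | all : Fm → Fm
  | ex : Fm → Fm
  | nab : Fm → Fm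

namespace Fm

/-- Action of a permutation of nominal constants on a formula. -/
def perm (π : Equiv.Perm ℕ) : Fm → Fm
  | top => top
  | bot => bot
  | atom p ts => atom p (ts.map (Tm.perm π))
  | eq s t => eq (Tm.perm π s) (Tm.perm π t)
  | natF t => natF (Tm.perm π t)
  | and B C => and (perm π B) (perm π C)
  | or B C => or (perm π B) (perm π C)
  | imp B C => imp (perm π B) (perm π C)
  | all B => all (perm π B)
  | ex B => ex (perm π B)
  | nab B => nab (perm π B)

/-- The support of a formula: the nominal constants occurring in it. -/
def supp : Fm → Finset ℕ
  | top => ∅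
  | bot => ∅
  | atom _ ts => ts.foldr (fun t s => t.supp ∪ s) ∅
  | eq s t => s.supp ∪ t.supp
  | natF t => t.supp
  | and B C => supp B ∪ supp C
  | or B C => supp B ∪ supp C
  | imp B C => supp B ∪ supp C
  | all B => supp B
  | ex B => supp B
  | nab B => supp B

/-- Capture-avoiding simultaneous substitution on formulas. -/
def substF (θ : ℕ → Tm) : Fm → Fm
  | top => top
  | bot => bot
  | atom p ts => atom p (ts.map (Tm.subst θ))
  | eq s t => eq (Tm.subst θ s) (Tm.subst θ t)
  | natF t => natF (Tm.subst θ t)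
  | and B C => and (substF θ B) (substF θ C)
  | or B C => or (substF θ B) (substF θ C)
  | imp B C => imp (substF θ B) (substF θ C)
  | all B => all (substF (Tm.upS θ) B)
  | ex B => ex (substF (Tm.upS θ) B)
  | nab B => nab (substF (Tm.upS θ) B)

/-- Instantiation of the outermost bound variable (index 0) by a term,
i.e. `B[t/x]`. -/
def inst (B : Fm) (t : Tm) : Fm :=
  substF (fun n => match n with | 0 => t | n+1 => Tm.var n) B

end Fm

namespace Tm

/-- Free variables of a term relative to a binder depth `k`. -/
def fv (k : ℕ) : Tm → Finset ℕ
  | nom _ => ∅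
  | cst _ => ∅
  | var x => if k ≤ x then {x - k} else ∅
  | app m n => fv k m ∪ fv k n
  | lam m => fv (k+1) m

end Tm

namespace Fm

/-- Free variables of a formula relative to a binder depth `k`. -/
def fv (k : ℕ) : Fm → Finset ℕ
  | top => ∅
  | bot => ∅
  | atom _ ts => ts.foldr (fun t s => t.fv k ∪ s) ∅
  | eq s t => s.fv k ∪ t.fv k
  | natF t => t.fv k
  | and B C => fv k B ∪ fv k C
  | or B C => fv k B ∪ fv k C
  | imp B C => fv k B ∪ fv k C
  | all B => fv (k+1) B
  | ex B => fv (k+1) B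
  | nab B => fv (k+1) B

end Fm

/-- Free variables of a context. -/
def fvCtx (Γ : List Fm) : Finset ℕ := Γ.foldr (fun B s => B.fv 0 ∪ s) ∅

/-- The (canonically ordered) list of nominal constants in the support of a
formula, as terms. -/
def suppNoms (B : Fm) : List Tm := ((Fm.supp B).sort (· ≤ ·)).map Tm.nom

/-- Iterated application. -/
def appList (t : Tm) (args : List Tm) : Tm := args.foldl Tm.app t

/-- The raised instantiation `h c⃗` of a fresh variable `h` applied to the
support `{c⃗}` of `B`, used by the ∀R and ∃L rules. -/
def raised (h : ℕ) (B : Fm) : Tm := appList (Tm.var h) (suppNoms B)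

/-- Zero, for the natural-number type `nt`. -/
def zeroTm : Tm := Tm.cst 0
/-- Successor, for the natural-number type `nt`. -/
def succTm (t : Tm) : Tm := Tm.app (Tm.cst 1) t

/-- Derivability in `LG^ω`, the logic `LG` extended with equality rules,
definition (fixed point) rules and natural number induction.

`Deriv u h Γ C` means: there is a derivation of the sequent `Σ ; Γ ⊢ C`
of height at most `h` (heights are ordinals, since `eqL` may have infinitely
many premises).  The parameter `u` gives, for each defined predicate `p` and
argument list `t⃗`, the instantiated body `B[t⃗/x⃗]` of its definition clause
`p x⃗ ≜ B`.  Each rule allows its premises at any strictly smaller height, so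
`Deriv u h Γ C` is monotone in `h` and `ht(Π) ≤ h` is expressed directly. -/
inductive Deriv (u : ℕ → List Tm → Fm) : Ordinal → List Fm → Fm → Prop
  | idPi {h Γ B B'} (π π' : Equiv.Perm ℕ) :
      Fm.perm π B = Fm.perm π' B' → Deriv u h (B :: Γ) B'
  | exch {h Γ Γ' C} : Γ.Perm Γ' → Deriv u h Γ C → Deriv u h Γ' C
  | contr {h h' Γ B C} : h' < h →
      Deriv u h' (B :: B :: Γ) C → Deriv u h (B :: Γ) C
  | mc {h h1 h2 Δ Γ B C} : h1 < h → h2 < h →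
      Deriv u h1 Δ B → Deriv u h2 (B :: Γ) C → Deriv u h (Δ ++ Γ) C
  | botL {h Γ C} : Deriv u h (Fm.bot :: Γ) C
  | topR {h Γ} : Deriv u h Γ Fm.top
  | andL1 {h h' Γ B1 B2 C} : h' < h →
      Deriv u h' (B1 :: Γ) C → Deriv u h (Fm.and B1 B2 :: Γ) C
  | andL2 {h h' Γ B1 B2 C} : h' < h →
      Deriv u h' (B2 :: Γ) C → Deriv u h (Fm.and B1 B2 :: Γ) C
  | andR {h h1 h2 Γ B C} : h1 < h → h2 < h →
      Deriv u h1 Γ B → Deriv u h2 Γ C → Deriv u h Γ (Fm.and B C)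
  | orL {h h1 h2 Γ B D C} : h1 < h → h2 < h →
      Deriv u h1 (B :: Γ) C → Deriv u h2 (D :: Γ) C →
      Deriv u h (Fm.or B D :: Γ) C
  | orR1 {h h' Γ B1 B2} : h' < h → Deriv u h' Γ B1 → Deriv u h Γ (Fm.or B1 B2)
  | orR2 {h h' Γ B1 B2} : h' < h → Deriv u h' Γ B2 → Deriv u h Γ (Fm.or B1 B2)
  | impL {h h1 h2 Γ B D C} : h1 < h → h2 < h →
      Deriv u h1 Γ B → Deriv u h2 (D :: Γ) C → Deriv u h (Fm.imp B D :: Γ) C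
  | impR {h h' Γ B C} : h' < h →
      Deriv u h' (B :: Γ) C → Deriv u h Γ (Fm.imp B C)
  | allL {h h' Γ B C} (t : Tm) : h' < h →
      Deriv u h' (Fm.inst B t :: Γ) C → Deriv u h (Fm.all B :: Γ) C
  | allR {h h' Γ B} (hv : ℕ) : h' < h → hv ∉ fvCtx Γ ∪ (Fm.all B).fv 0 →
      Deriv u h' Γ (Fm.inst B (raised hv B)) → Deriv u h Γ (Fm.all B)
  | exL {h h' Γ B C} (hv : ℕ) : h' < h →
      hv ∉ fvCtx Γ ∪ (Fm.ex B).fv 0 ∪ C.fv 0 →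
      Deriv u h' (Fm.inst B (raised hv B) :: Γ) C →
      Deriv u h (Fm.ex B :: Γ) C
  | exR {h h' Γ B} (t : Tm) : h' < h →
      Deriv u h' Γ (Fm.inst B t) → Deriv u h Γ (Fm.ex B)
  | nabL {h h' Γ B C} (a : ℕ) : h' < h → a ∉ Fm.supp B →
      Deriv u h' (Fm.inst B (Tm.nom a) :: Γ) C → Deriv u h (Fm.nab B :: Γ) C
  | nabR {h h' Γ B} (a : ℕ) : h' < h → a ∉ Fm.supp B →
      Deriv u h' Γ (Fm.inst B (Tm.nom a)) → Deriv u h Γ (Fm.nab B)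
  | eqR {h Γ t} : Deriv u h Γ (Fm.eq t t)
  | eqL {h Γ C s t} (hf : (ℕ → Tm) → Ordinal) :
      (∀ θ, hf θ < h) →
      (∀ θ, SigmaSub θ → Tm.subst θ s = Tm.subst θ t →
        Deriv u (hf θ) (Γ.map (Fm.substF θ)) (Fm.substF θ C)) →
      Deriv u h (Fm.eq s t :: Γ) C
  | defL {h h' Γ C p ts} : h' < h →
      Deriv u h' (u p ts :: Γ) C → Deriv u h (Fm.atom p ts :: Γ) C
  | defR {h h' Γ p ts} : h' < h →
      Deriv u h' Γ (u p ts) → Deriv u h Γ (Fm.atom p ts)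
  | natRz {h Γ} : Deriv u h Γ (Fm.natF zeroTm)
  | natRs {h h' Γ I} : h' < h →
      Deriv u h' Γ (Fm.natF I) → Deriv u h Γ (Fm.natF (succTm I))
  | natL {h h1 h2 h3 Γ C D I} (j : ℕ) : h1 < h → h2 < h → h3 < h →
      j ∉ (Fm.all D).fv 0 →
      Deriv u h1 [] (Fm.inst D zeroTm) →
      Deriv u h2 [Fm.inst D (Tm.var j)] (Fm.inst D (succTm (Tm.var j))) →
      Deriv u h3 (Fm.inst D I :: Γ) C →
      Deriv u h (Fm.natF I :: Γ) C

namespace Tm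

def upR (f : ℕ → ℕ) : ℕ → ℕ
  | 0 => 0
  | k+1 => f k + 1

lemma rename_lam (f : ℕ → ℕ) (m : Tm) :
    rename f (lam m) = lam (rename (upR f) m) := by
  have h : (fun k => match k with | 0 => 0 | Nat.succ k => f k + 1) = upR f := by
    funext k; cases k <;> rfl
  simp only [rename, h]

lemma rename_ext : ∀ (t : Tm) (f g : ℕ → ℕ), (∀ x, f x = g x) →
    rename f t = rename g t
  | nom a, _, _, _ => rfl
  | cst c, _, _, _ => rfl
  | var x, f, g, h => by simp [rename, h]
  | app m n, f, g, h => by simp [rename, rename_ext m f g h, rename_ext n f g h]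
  | lam m, f, g, h => by
      simp only [rename_lam]
      rw [rename_ext m (upR f) (upR g)]
      intro x; cases x with
      | zero => rfl
      | succ k => simp [upR, h]

lemma subst_ext : ∀ (t : Tm) (θ σ : ℕ → Tm), (∀ x, θ x = σ x) →
    subst θ t = subst σ t
  | nom a, _, _, _ => rfl
  | cst c, _, _, _ => rfl
  | var x, θ, σ, h => h x
  | app m n, θ, σ, h => by simp [subst, subst_ext m θ σ h, subst_ext n θ σ h]
  | lam m, θ, σ, h => by
      simp only [subst]
      rw [subst_ext m (upS θ) (upS σ)]
      intro x; cases x with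
      | zero => rfl
      | succ k => simp [upS, h]

lemma rename_rename : ∀ (t : Tm) (f g : ℕ → ℕ),
    rename f (rename g t) = rename (fun x => f (g x)) t
  | nom a, _, _ => rfl
  | cst c, _, _ => rfl
  | var x, _, _ => rfl
  | app m n, f, g => by simp [rename, rename_rename m, rename_rename n]
  | lam m, f, g => by
      simp only [rename_lam]
      rw [rename_rename m]
      congr 1
      apply rename_ext
      intro x; cases x <;> simp [upR]

lemma subst_rename : ∀ (t : Tm) (θ : ℕ → Tm) (f : ℕ → ℕ),
    subst θ (rename f t) = subst (fun x => θ (f x)) t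
  | nom a, _, _ => rfl
  | cst c, _, _ => rfl
  | var x, _, _ => rfl
  | app m n, θ, f => by simp [subst, rename, subst_rename m, subst_rename n]
  | lam m, θ, f => by
      simp only [rename_lam, subst]
      rw [subst_rename m]
      congr 1
      apply subst_ext
      intro x; cases x <;> simp [upR, upS]

lemma rename_subst : ∀ (t : Tm) (f : ℕ → ℕ) (θ : ℕ → Tm),
    rename f (subst θ t) = subst (fun x => rename f (θ x)) t
  | nom a, _, _ => rfl
  | cst c, _, _ => rfl
  | var x, _, _ => rfl
  | app m n, f, θ => by simp [subst, rename, rename_subst m, rename_subst n]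
  | lam m, f, θ => by
      simp only [subst, rename_lam]
      rw [rename_subst m]
      congr 1
      apply subst_ext
      intro x; cases x with
      | zero => rfl
      | succ k =>
          simp only [upS]
          rw [rename_rename, rename_rename]
          apply rename_ext; intro y; simp [upR]

lemma subst_subst : ∀ (t : Tm) (θ σ : ℕ → Tm),
    subst θ (subst σ t) = subst (fun x => subst θ (σ x)) t
  | nom a, _, _ => rfl
  | cst c, _, _ => rfl
  | var x, _, _ => rfl
  | app m n, θ, σ => by simp [subst, subst_subst m, subst_subst n]
  | lam m, θ, σ => by
      simp only [subst]
      rw [subst_subst m]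
      congr 1
      apply subst_ext
      intro x; cases x with
      | zero => rfl
      | succ k =>
          simp only [upS]
          rw [subst_rename, rename_subst]
          apply subst_ext; intro y; rfl

lemma subst_id : ∀ (t : Tm), subst var t = t
  | nom a => rfl
  | cst c => rfl
  | var x => rfl
  | app m n => by simp [subst, subst_id m, subst_id n]
  | lam m => by
      simp only [subst]
      rw [subst_ext m (upS var) var, subst_id m]
      intro x; cases x <;> rfl

lemma supp_rename : ∀ (t : Tm) (f : ℕ → ℕ), supp (rename f t) = supp t
  | nom a, _ => rfl
  | cst c, _ => rfl
  | var x, _ => rfl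
  | app m n, f => by simp [rename, supp, supp_rename m, supp_rename n]
  | lam m, f => by simp [rename_lam, supp, supp_rename m]

end Tm

lemma SigmaSub.upS {θ : ℕ → Tm} (h : SigmaSub θ) : SigmaSub (Tm.upS θ) := by
  intro x; cases x with
  | zero => rfl
  | succ k => simp [Tm.upS, Tm.supp_rename, h k]

namespace Tm

lemma supp_subst : ∀ (t : Tm) (θ : ℕ → Tm), SigmaSub θ →
    supp (subst θ t) = supp t
  | nom a, _, _ => rfl
  | cst c, _, _ => rfl
  | var x, θ, h => h x
  | app m n, θ, h => by simp [subst, supp, supp_subst m θ h, supp_subst n θ h]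
  | lam m, θ, h => by simp [subst, supp, supp_subst m _ h.upS]

lemma perm_empty : ∀ (t : Tm) (π : Equiv.Perm ℕ), supp t = ∅ → perm π t = t
  | nom a, π, h => by simp [supp] at h
  | cst c, _, _ => rfl
  | var x, _, _ => rfl
  | app m n, π, h => by
      simp [supp, Finset.union_eq_empty] at h
      simp [perm, perm_empty m π h.1, perm_empty n π h.2]
  | lam m, π, h => by
      simp only [supp] at h
      simp [perm, perm_empty m π h]

lemma perm_rename : ∀ (t : Tm) (π : Equiv.Perm ℕ) (f : ℕ → ℕ),
    perm π (rename f t) = rename f (perm π t)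
  | nom a, _, _ => rfl
  | cst c, _, _ => rfl
  | var x, _, _ => rfl
  | app m n, π, f => by simp [perm, rename, perm_rename m, perm_rename n]
  | lam m, π, f => by
      rw [rename_lam]; simp only [perm]; rw [rename_lam, perm_rename m]

lemma perm_subst : ∀ (t : Tm) (π : Equiv.Perm ℕ) (θ : ℕ → Tm), SigmaSub θ →
    perm π (subst θ t) = subst θ (perm π t)
  | nom a, _, _, _ => rfl
  | cst c, _, _, _ => rfl
  | var x, π, θ, h => perm_empty (θ x) π (h x)
  | app m n, π, θ, h => by
      simp [perm, subst, perm_subst m π θ h, perm_subst n π θ h]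
  | lam m, π, θ, h => by simp [perm, subst, perm_subst m π _ h.upS]

lemma fv_shift : ∀ (t : Tm) (k y : ℕ), y ∈ fv (k+1) t ↔ y+1 ∈ fv k t
  | nom a, _, _ => by simp [fv]
  | cst c, _, _ => by simp [fv]
  | var x, k, y => by
      simp only [fv]
      split_ifs with h1 h2 <;> simp_all <;> omega
  | app m n, k, y => by simp [fv, fv_shift m, fv_shift n]
  | lam m, k, y => by simp [fv, fv_shift m]

lemma subst_ext_fv : ∀ (t : Tm) (θ σ : ℕ → Tm),
    (∀ x ∈ fv 0 t, θ x = σ x) → subst θ t = subst σ t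
  | nom a, _, _, _ => rfl
  | cst c, _, _, _ => rfl
  | var x, θ, σ, h => h x (by simp [fv])
  | app m n, θ, σ, h => by
      simp only [subst]
      rw [subst_ext_fv m θ σ, subst_ext_fv n θ σ] <;>
        intro x hx <;> exact h x (by simp [fv]; tauto)
  | lam m, θ, σ, h => by
      simp only [subst]
      rw [subst_ext_fv m (upS θ) (upS σ)]
      intro x hx
      cases x with
      | zero => rfl
      | succ k =>
          simp only [upS]
          rw [h k]
          exact (fv_shift m 0 k).mpr hx

end Tm

namespace Fm

lemma substF_ext : ∀ (B : Fm) (θ σ : ℕ → Tm), (∀ x, θ x = σ x) →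
    substF θ B = substF σ B
  | top, _, _, _ => rfl
  | bot, _, _, _ => rfl
  | atom p ts, θ, σ, h => by
      simp only [substF]
      congr 1
      exact List.map_congr_left (fun t _ => Tm.subst_ext t θ σ h)
  | eq s t, θ, σ, h => by simp [substF, Tm.subst_ext s θ σ h, Tm.subst_ext t θ σ h]
  | natF t, θ, σ, h => by simp [substF, Tm.subst_ext t θ σ h]
  | and B C, θ, σ, h => by simp [substF, substF_ext B θ σ h, substF_ext C θ σ h]
  | or B C, θ, σ, h => by simp [substF, substF_ext B θ σ h, substF_ext C θ σ h]
  | imp B C, θ, σ, h => by simp [substF, substF_ext B θ σ h, substF_ext C θ σ h]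
  | all B, θ, σ, h => by
      simp only [substF]
      rw [substF_ext B (Tm.upS θ) (Tm.upS σ) (fun x => by cases x <;> simp [Tm.upS, h])]
  | ex B, θ, σ, h => by
      simp only [substF]
      rw [substF_ext B (Tm.upS θ) (Tm.upS σ) (fun x => by cases x <;> simp [Tm.upS, h])]
  | nab B, θ, σ, h => by
      simp only [substF]
      rw [substF_ext B (Tm.upS θ) (Tm.upS σ) (fun x => by cases x <;> simp [Tm.upS, h])]

lemma upS_comp (θ σ : ℕ → Tm) (x : ℕ) :
    Tm.subst (Tm.upS θ) (Tm.upS σ x) = Tm.upS (fun y => Tm.subst θ (σ y)) x := by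
  cases x with
  | zero => rfl
  | succ k =>
      show Tm.subst (Tm.upS θ) (Tm.rename Nat.succ (σ k)) =
        Tm.rename Nat.succ (Tm.subst θ (σ k))
      rw [Tm.subst_rename, Tm.rename_subst]
      exact Tm.subst_ext _ _ _ (fun y => rfl)

lemma substF_substF : ∀ (B : Fm) (θ σ : ℕ → Tm),
    substF θ (substF σ B) = substF (fun x => Tm.subst θ (σ x)) B
  | top, _, _ => rfl
  | bot, _, _ => rfl
  | atom p ts, θ, σ => by
      simp only [substF, List.map_map]
      congr 1
      exact List.map_congr_left (fun t _ => Tm.subst_subst t θ σ)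
  | eq s t, θ, σ => by simp [substF, Tm.subst_subst]
  | natF t, θ, σ => by simp [substF, Tm.subst_subst]
  | and B C, θ, σ => by simp [substF, substF_substF B, substF_substF C]
  | or B C, θ, σ => by simp [substF, substF_substF B, substF_substF C]
  | imp B C, θ, σ => by simp [substF, substF_substF B, substF_substF C]
  | all B, θ, σ => by
      simp only [substF, substF_substF B]
      rw [substF_ext B _ _ (upS_comp θ σ)]
  | ex B, θ, σ => by
      simp only [substF, substF_substF B]
      rw [substF_ext B _ _ (upS_comp θ σ)]
  | nab B, θ, σ => by
      simp only [substF, substF_substF B]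
      rw [substF_ext B _ _ (upS_comp θ σ)]

lemma supp_substF : ∀ (B : Fm) (θ : ℕ → Tm), SigmaSub θ →
    supp (substF θ B) = supp B
  | top, _, _ => rfl
  | bot, _, _ => rfl
  | atom p ts, θ, h => by
      simp only [substF, supp]
      induction ts with
      | nil => rfl
      | cons t ts ih => simp [List.foldr, Tm.supp_subst t θ h, ih]
  | eq s t, θ, h => by simp [substF, supp, Tm.supp_subst s θ h, Tm.supp_subst t θ h]
  | natF t, θ, h => by simp [substF, supp, Tm.supp_subst t θ h]
  | and B C, θ, h => by simp [substF, supp, supp_substF B θ h, supp_substF C θ h]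
  | or B C, θ, h => by simp [substF, supp, supp_substF B θ h, supp_substF C θ h]
  | imp B C, θ, h => by simp [substF, supp, supp_substF B θ h, supp_substF C θ h]
  | all B, θ, h => by simp [substF, supp, supp_substF B _ h.upS]
  | ex B, θ, h => by simp [substF, supp, supp_substF B _ h.upS]
  | nab B, θ, h => by simp [substF, supp, supp_substF B _ h.upS]

lemma perm_substF : ∀ (B : Fm) (π : Equiv.Perm ℕ) (θ : ℕ → Tm), SigmaSub θ →
    perm π (substF θ B) = substF θ (perm π B)
  | top, _, _, _ => rfl
  | bot, _, _, _ => rfl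
  | atom p ts, π, θ, h => by
      simp only [substF, perm, List.map_map]
      congr 1
      exact List.map_congr_left (fun t _ => Tm.perm_subst t π θ h)
  | eq s t, π, θ, h => by simp [substF, perm, Tm.perm_subst s π θ h, Tm.perm_subst t π θ h]
  | natF t, π, θ, h => by simp [substF, perm, Tm.perm_subst t π θ h]
  | and B C, π, θ, h => by simp [substF, perm, perm_substF B π θ h, perm_substF C π θ h]
  | or B C, π, θ, h => by simp [substF, perm, perm_substF B π θ h, perm_substF C π θ h]
  | imp B C, π, θ, h => by simp [substF, perm, perm_substF B π θ h, perm_substF C π θ h]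
  | all B, π, θ, h => by simp [substF, perm, perm_substF B π _ h.upS]
  | ex B, π, θ, h => by simp [substF, perm, perm_substF B π _ h.upS]
  | nab B, π, θ, h => by simp [substF, perm, perm_substF B π _ h.upS]

lemma fv_shift : ∀ (B : Fm) (k y : ℕ), y ∈ fv (k+1) B ↔ y+1 ∈ fv k B
  | top, _, _ => by simp [fv]
  | bot, _, _ => by simp [fv]
  | atom p ts, k, y => by
      simp only [fv]
      induction ts with
      | nil => simp
      | cons t ts ih => simp [List.foldr, Tm.fv_shift t k y, ih]
  | eq s t, k, y => by simp [fv, Tm.fv_shift s, Tm.fv_shift t]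
  | natF t, k, y => by simp [fv, Tm.fv_shift t]
  | and B C, k, y => by simp [fv, fv_shift B, fv_shift C]
  | or B C, k, y => by simp [fv, fv_shift B, fv_shift C]
  | imp B C, k, y => by simp [fv, fv_shift B, fv_shift C]
  | all B, k, y => by simp [fv, fv_shift B]
  | ex B, k, y => by simp [fv, fv_shift B]
  | nab B, k, y => by simp [fv, fv_shift B]

lemma substF_ext_fv : ∀ (B : Fm) (θ σ : ℕ → Tm),
    (∀ x ∈ fv 0 B, θ x = σ x) → substF θ B = substF σ B
  | top, _, _, _ => rfl
  | bot, _, _, _ => rfl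
  | atom p ts, θ, σ, h => by
      simp only [substF]
      congr 1
      apply List.map_congr_left
      intro t ht
      apply Tm.subst_ext_fv t θ σ
      intro x hx
      apply h
      simp only [fv]
      clear h
      induction ts with
      | nil => simp at ht
      | cons s ts ih =>
          simp only [List.foldr, Finset.mem_union]
          rcases List.mem_cons.mp ht with rfl | ht'
          · exact Or.inl hx
          · exact Or.inr (ih ht')
  | eq s t, θ, σ, h => by
      simp only [substF]
      rw [Tm.subst_ext_fv s θ σ (fun x hx => h x (by simp [fv]; tauto)),
          Tm.subst_ext_fv t θ σ (fun x hx => h x (by simp [fv]; tauto))]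
  | natF t, θ, σ, h => by
      simp only [substF]
      rw [Tm.subst_ext_fv t θ σ (fun x hx => h x (by simpa [fv] using hx))]
  | and B C, θ, σ, h => by
      simp only [substF]
      rw [substF_ext_fv B θ σ (fun x hx => h x (by simp [fv]; tauto)),
          substF_ext_fv C θ σ (fun x hx => h x (by simp [fv]; tauto))]
  | or B C, θ, σ, h => by
      simp only [substF]
      rw [substF_ext_fv B θ σ (fun x hx => h x (by simp [fv]; tauto)),
          substF_ext_fv C θ σ (fun x hx => h x (by simp [fv]; tauto))]
  | imp B C, θ, σ, h => by
      simp only [substF]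
      rw [substF_ext_fv B θ σ (fun x hx => h x (by simp [fv]; tauto)),
          substF_ext_fv C θ σ (fun x hx => h x (by simp [fv]; tauto))]
  | all B, θ, σ, h => by
      simp only [substF]
      rw [substF_ext_fv B (Tm.upS θ) (Tm.upS σ)]
      intro x hx
      cases x with
      | zero => rfl
      | succ k =>
          show Tm.rename Nat.succ (θ k) = Tm.rename Nat.succ (σ k)
          rw [h k ((fv_shift B 0 k).mpr hx)]
  | ex B, θ, σ, h => by
      simp only [substF]
      rw [substF_ext_fv B (Tm.upS θ) (Tm.upS σ)]
      intro x hx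
      cases x with
      | zero => rfl
      | succ k =>
          show Tm.rename Nat.succ (θ k) = Tm.rename Nat.succ (σ k)
          rw [h k ((fv_shift B 0 k).mpr hx)]
  | nab B, θ, σ, h => by
      simp only [substF]
      rw [substF_ext_fv B (Tm.upS θ) (Tm.upS σ)]
      intro x hx
      cases x with
      | zero => rfl
      | succ k =>
          show Tm.rename Nat.succ (θ k) = Tm.rename Nat.succ (σ k)
          rw [h k ((fv_shift B 0 k).mpr hx)]

/-- Key composition: substitution commutes with instantiation. -/
lemma substF_inst (θ : ℕ → Tm) (B : Fm) (t : Tm) :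
    substF θ (inst B t) = inst (substF (Tm.upS θ) B) (Tm.subst θ t) := by
  unfold inst
  rw [substF_substF, substF_substF]
  apply substF_ext
  intro x
  cases x with
  | zero => rfl
  | succ k =>
      show Tm.subst θ (Tm.var k) =
        Tm.subst (fun n => match n with | 0 => Tm.subst θ t | n+1 => Tm.var n)
          (Tm.rename Nat.succ (θ k))
      rw [Tm.subst_rename]
      rw [Tm.subst_ext (θ k) _ Tm.var (fun y => rfl), Tm.subst_id]
      rfl

end Fm

lemma subst_appList (θ : ℕ → Tm) (t : Tm) (l : List Tm) :
    Tm.subst θ (appList t l) = appList (Tm.subst θ t) (l.map (Tm.subst θ)) := by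
  induction l generalizing t with
  | nil => rfl
  | cons s l ih =>
      simp only [appList, List.foldl_cons, List.map_cons] at *
      rw [ih (Tm.app t s)]
      rfl

lemma suppNoms_substF {θ : ℕ → Tm} (h : SigmaSub θ) (B : Fm) :
    suppNoms (Fm.substF θ B) = suppNoms B := by
  unfold suppNoms
  rw [Fm.supp_substF B θ h]

lemma subst_raised (θ : ℕ → Tm) (hv hv' : ℕ) (B : Fm) (hθv : θ hv = Tm.var hv') :
    Tm.subst θ (raised hv B) = raised hv' B := by
  unfold raised
  rw [subst_appList]
  have e1 : Tm.subst θ (Tm.var hv) = Tm.var hv' := hθv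
  rw [e1]
  congr 1
  unfold suppNoms
  rw [List.map_map]
  apply List.map_congr_left
  intro a _
  rfl

lemma fv_mem_fvCtx {Γ : List Fm} {B : Fm} (hB : B ∈ Γ) {x : ℕ}
    (hx : x ∈ B.fv 0) : x ∈ fvCtx Γ := by
  induction Γ with
  | nil => simp at hB
  | cons D Γ ih =>
      have : fvCtx (D :: Γ) = D.fv 0 ∪ fvCtx Γ := rfl
      rw [this, Finset.mem_union]
      rcases List.mem_cons.mp hB with rfl | hB'
      · exact Or.inl hx
      · exact Or.inr (ih hB')

lemma mapSubst_ext_fv {Γ : List Fm} {θ σ : ℕ → Tm}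
    (h : ∀ x ∈ fvCtx Γ, θ x = σ x) :
    Γ.map (Fm.substF θ) = Γ.map (Fm.substF σ) :=
  List.map_congr_left fun B hB =>
    Fm.substF_ext_fv B θ σ (fun x hx => h x (fv_mem_fvCtx hB hx))

/-- substitution is height-preserving admissible in LG^ω:
if `Π` derives `Σ ; Γ ⊢ C` and `θ` is a Σ-substitution (its range contains no
nominal constants), then `Σθ ; Γθ ⊢ Cθ` has a derivation of no greater height.
(The hypothesis `hu` states that the definition clauses are closed, so that
instantiated clause bodies commute with substitution.) -/
theorem substitution_hp {u : ℕ → List Tm → Fm}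
    (hu : ∀ p ts θ, SigmaSub θ →
      Fm.substF θ (u p ts) = u p (ts.map (Tm.subst θ)))
    {h : Ordinal} {Γ : List Fm} {C : Fm} (θ : ℕ → Tm) (hθ : SigmaSub θ)
    (d : Deriv u h Γ C) :
    Deriv u h (Γ.map (Fm.substF θ)) (Fm.substF θ C) := by
  induction d generalizing θ hθ with
  | idPi π π' e =>
      simp only [List.map_cons]
      refine Deriv.idPi π π' ?_
      rw [Fm.perm_substF _ _ _ hθ, Fm.perm_substF _ _ _ hθ, e]
  | exch p _ ih =>
      exact Deriv.exch (p.map _) (ih θ hθ)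
  | contr hlt _ ih =>
      simp only [List.map_cons]
      exact Deriv.contr hlt (by simpa using ih θ hθ)
  | mc h1 h2 _ _ ih1 ih2 =>
      rw [List.map_append]
      exact Deriv.mc h1 h2 (ih1 θ hθ) (by simpa using ih2 θ hθ)
  | botL =>
      simp only [List.map_cons, Fm.substF]
      exact Deriv.botL
  | topR =>
      exact Deriv.topR
  | andL1 hlt _ ih =>
      simp only [List.map_cons, Fm.substF]
      exact Deriv.andL1 hlt (by simpa using ih θ hθ)
  | andL2 hlt _ ih =>
      simp only [List.map_cons, Fm.substF]
      exact Deriv.andL2 hlt (by simpa using ih θ hθ)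
  | andR h1 h2 _ _ ih1 ih2 =>
      exact Deriv.andR h1 h2 (ih1 θ hθ) (ih2 θ hθ)
  | orL h1 h2 _ _ ih1 ih2 =>
      simp only [List.map_cons, Fm.substF]
      exact Deriv.orL h1 h2 (by simpa using ih1 θ hθ) (by simpa using ih2 θ hθ)
  | orR1 hlt _ ih =>
      exact Deriv.orR1 hlt (ih θ hθ)
  | orR2 hlt _ ih =>
      exact Deriv.orR2 hlt (ih θ hθ)
  | impL h1 h2 _ _ ih1 ih2 =>
      simp only [List.map_cons, Fm.substF]
      exact Deriv.impL h1 h2 (ih1 θ hθ) (by simpa using ih2 θ hθ)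
  | impR hlt _ ih =>
      exact Deriv.impR hlt (by simpa using ih θ hθ)
  | allL t hlt _ ih =>
      simp only [List.map_cons, Fm.substF]
      refine Deriv.allL (Tm.subst θ t) hlt ?_
      have := ih θ hθ
      rw [List.map_cons, Fm.substF_inst] at this
      exact this
  | @allR _ _ Γ' B hv hlt hfr _ ih =>
      simp only [Fm.substF]
      obtain ⟨hv', hfr'⟩ :=
        Infinite.exists_notMem_finset
          (fvCtx (List.map (Fm.substF θ) Γ') ∪
            (Fm.all (Fm.substF (Tm.upS θ) B)).fv 0)
      set θ' : ℕ → Tm := fun x => if x = hv then Tm.var hv' else θ x with hθ'def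
      have hθ' : SigmaSub θ' := by
        intro x
        by_cases hx : x = hv <;> simp [hθ'def, hx, Tm.supp, hθ x]
      rw [Finset.mem_union, not_or] at hfr
      have hΓ : List.map (Fm.substF θ') Γ' = List.map (Fm.substF θ) Γ' :=
        mapSubst_ext_fv (fun x hx => by
          have hne : x ≠ hv := fun e => hfr.1 (e ▸ hx)
          simp [hθ'def, hne])
      have hB : Fm.substF (Tm.upS θ') B = Fm.substF (Tm.upS θ) B := by
        apply Fm.substF_ext_fv
        intro x hx
        cases x with
        | zero => rfl
        | succ k =>
            have hk : k ∈ Fm.fv (0+1) B := (Fm.fv_shift B 0 k).mpr hx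
            have hkv : k ≠ hv := fun e => hfr.2 (e ▸ hk)
            show Tm.rename Nat.succ (θ' k) = Tm.rename Nat.succ (θ k)
            simp [hθ'def, hkv]
      have hraise : Tm.subst θ' (raised hv B)
          = raised hv' (Fm.substF (Tm.upS θ) B) := by
        rw [subst_raised θ' hv hv' B (by simp [hθ'def])]
        unfold raised
        rw [suppNoms_substF hθ.upS B]
      have hd := ih θ' hθ'
      rw [Fm.substF_inst, hB, hraise, hΓ] at hd
      exact Deriv.allR hv' hlt hfr' hd
  | @exL _ _ Γ' B C hv hlt hfr _ ih =>
      simp only [List.map_cons, Fm.substF]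
      obtain ⟨hv', hfr'⟩ :=
        Infinite.exists_notMem_finset
          (fvCtx (List.map (Fm.substF θ) Γ') ∪
            (Fm.ex (Fm.substF (Tm.upS θ) B)).fv 0 ∪ (Fm.substF θ C).fv 0)
      set θ' : ℕ → Tm := fun x => if x = hv then Tm.var hv' else θ x with hθ'def
      have hθ' : SigmaSub θ' := by
        intro x
        by_cases hx : x = hv <;> simp [hθ'def, hx, Tm.supp, hθ x]
      rw [Finset.mem_union, Finset.mem_union, not_or, not_or] at hfr
      have hΓ : List.map (Fm.substF θ') Γ' = List.map (Fm.substF θ) Γ' :=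
        mapSubst_ext_fv (fun x hx => by
          have hne : x ≠ hv := fun e => hfr.1.1 (e ▸ hx)
          simp [hθ'def, hne])
      have hC : Fm.substF θ' C = Fm.substF θ C :=
        Fm.substF_ext_fv C θ' θ (fun x hx => by
          have hne : x ≠ hv := fun e => hfr.2 (e ▸ hx)
          simp [hθ'def, hne])
      have hB : Fm.substF (Tm.upS θ') B = Fm.substF (Tm.upS θ) B := by
        apply Fm.substF_ext_fv
        intro x hx
        cases x with
        | zero => rfl
        | succ k =>
            have hk : k ∈ Fm.fv (0+1) B := (Fm.fv_shift B 0 k).mpr hx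
            have hkv : k ≠ hv := fun e => hfr.1.2 (e ▸ hk)
            show Tm.rename Nat.succ (θ' k) = Tm.rename Nat.succ (θ k)
            simp [hθ'def, hkv]
      have hraise : Tm.subst θ' (raised hv B)
          = raised hv' (Fm.substF (Tm.upS θ) B) := by
        rw [subst_raised θ' hv hv' B (by simp [hθ'def])]
        unfold raised
        rw [suppNoms_substF hθ.upS B]
      have hd := ih θ' hθ'
      rw [List.map_cons, Fm.substF_inst, hB, hraise, hΓ, hC] at hd
      exact Deriv.exL hv' hlt hfr' hd
  | exR t hlt _ ih =>
      refine Deriv.exR (Tm.subst θ t) hlt ?_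
      have := ih θ hθ
      rw [Fm.substF_inst] at this
      exact this
  | @nabL _ _ _ B C a hlt ha _ ih =>
      simp only [List.map_cons, Fm.substF]
      refine Deriv.nabL a hlt ?_ ?_
      · rw [Fm.supp_substF B _ hθ.upS]; exact ha
      · have := ih θ hθ
        rw [List.map_cons, Fm.substF_inst] at this
        exact this
  | @nabR _ _ _ B a hlt ha _ ih =>
      simp only [Fm.substF]
      refine Deriv.nabR a hlt ?_ ?_
      · rw [Fm.supp_substF B _ hθ.upS]; exact ha
      · have := ih θ hθ
        rw [Fm.substF_inst] at this
        exact this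
  | eqR =>
      simp only [Fm.substF]
      exact Deriv.eqR
  | @eqL _ Γ' C s t hf hb hprem ih =>
      simp only [List.map_cons, Fm.substF]
      refine Deriv.eqL (fun σ => hf (fun x => Tm.subst σ (θ x)))
        (fun σ => hb _) ?_
      intro σ hσ heq
      have hθ2 : SigmaSub (fun x => Tm.subst σ (θ x)) := fun x => by
        rw [Tm.supp_subst _ σ hσ, hθ x]
      have heq' : Tm.subst (fun x => Tm.subst σ (θ x)) s
          = Tm.subst (fun x => Tm.subst σ (θ x)) t := by
        rw [← Tm.subst_subst, ← Tm.subst_subst, heq]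
      have hd := hprem _ hθ2 heq'
      have e1 : List.map (Fm.substF σ) (List.map (Fm.substF θ) Γ')
          = List.map (Fm.substF (fun x => Tm.subst σ (θ x))) Γ' := by
        rw [List.map_map]
        exact List.map_congr_left (fun B _ => Fm.substF_substF B σ θ)
      rw [e1, Fm.substF_substF]
      exact hd
  | defL hlt _ ih =>
      simp only [List.map_cons, Fm.substF]
      refine Deriv.defL hlt ?_
      have := ih θ hθ
      rw [List.map_cons, hu _ _ θ hθ] at this
      exact this
  | defR hlt _ ih =>
      simp only [Fm.substF]
      refine Deriv.defR hlt ?_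
      have := ih θ hθ
      rw [hu _ _ θ hθ] at this
      exact this
  | natRz =>
      exact Deriv.natRz
  | natRs hlt _ ih =>
      exact Deriv.natRs hlt (ih θ hθ)
  | @natL _ _ _ _ Γ' C D I j h1 h2 h3 hj _ _ _ ih1 ih2 ih3 =>
      simp only [List.map_cons, Fm.substF]
      obtain ⟨j', hj'⟩ :=
        Infinite.exists_notMem_finset ((Fm.all (Fm.substF (Tm.upS θ) D)).fv 0)
      set θ' : ℕ → Tm := fun x => if x = j then Tm.var j' else θ x with hθ'def
      have hθ' : SigmaSub θ' := by
        intro x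
        by_cases hx : x = j <;> simp [hθ'def, hx, Tm.supp, hθ x]
      have hD : Fm.substF (Tm.upS θ') D = Fm.substF (Tm.upS θ) D := by
        apply Fm.substF_ext_fv
        intro x hx
        cases x with
        | zero => rfl
        | succ k =>
            have hk : k ∈ Fm.fv (0+1) D := (Fm.fv_shift D 0 k).mpr hx
            have hkv : k ≠ j := fun e => hj (e ▸ hk)
            show Tm.rename Nat.succ (θ' k) = Tm.rename Nat.succ (θ k)
            simp [hθ'def, hkv]
      have hd1 := ih1 θ hθ
      rw [Fm.substF_inst] at hd1
      have hd2 := ih2 θ' hθ'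
      rw [List.map_cons, List.map_nil, Fm.substF_inst, Fm.substF_inst, hD] at hd2
      have hθ'j : Tm.subst θ' (Tm.var j) = Tm.var j' := by
        show (if j = j then Tm.var j' else θ j) = Tm.var j'
        simp
      have hθ's : Tm.subst θ' (succTm (Tm.var j)) = succTm (Tm.var j') := by
        show Tm.app (Tm.subst θ' (Tm.cst 1)) (Tm.subst θ' (Tm.var j)) = _
        rw [hθ'j]; rfl
      rw [hθ'j, hθ's] at hd2
      have hd3 := ih3 θ hθ
      rw [List.map_cons, Fm.substF_inst] at hd3
      exact Deriv.natL j' h1 h2 h3 hj' hd1 hd2 hd3
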